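/- For any choice of signs s₁,s₂,s₃,s₄ ∈ {1,-1} with s₁s₂s₃s₄ = 1 (an even number of minus signs), the product of projectors ((1+s₁·X⊗X⊗X)/2)·((1+s₂·X⊗Y⊗Y)/2)·((1+s₃·Y⊗X⊗Y)/2)·((1+s₄·Y⊗Y⊗X)/2) equals the zero matrix. -/

import Mathlib

/-!
Write `a`, `b`, `c` for the first three signed Pauli strings `s₁ • XXX`, `s₂ • XYY`, `s₃ • YXY`.
They are commuting involutions, and since `XXX * XYY * YXY = -YYX` and `s₄ = s₁ s₂ s₃`, the
fourth signed string is `-abc`. For `p = (1 + a)(1 + b)(1 + c)` each factor absorbs its own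
involution, `(1 + a) a = 1 + a`, so `p a = p b = p c = p`; hence `p (1 - abc) = 0`.
-/

open Matrix Kronecker Complex

noncomputable def PauliX : Matrix (Fin 2) (Fin 2) ℂ := !![0, 1; 1, 0]
noncomputable def PauliY : Matrix (Fin 2) (Fin 2) ℂ := !![0, -I; I, 0]

section Involutions

variable {R : Type*} [Ring R] {a b c : R}

theorem one_add_mul_self_eq_one_add (ha : a * a = 1) : (1 + a) * a = 1 + a := by
  rw [add_mul, one_mul, ha, add_comm]

theorem one_add_mul_one_add_mul_one_add_mul_one_sub_mul_mul_eq_zero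
    (ha : a * a = 1) (hb : b * b = 1) (hc : c * c = 1)
    (hab : Commute a b) (hac : Commute a c) (hbc : Commute b c) :
    (1 + a) * (1 + b) * (1 + c) * (1 - a * b * c) = 0 := by
  set p := (1 + a) * (1 + b) * (1 + c)
  have hpa : p * a = p := by
    have : Commute ((1 + b) * (1 + c)) a :=
      ((Commute.one_left a).add_left hab.symm).mul_left ((Commute.one_left a).add_left hac.symm)
    calc p * a = (1 + a) * ((1 + b) * (1 + c) * a) := by simp only [p, mul_assoc]
      _ = (1 + a) * a * ((1 + b) * (1 + c)) := by rw [this.eq, mul_assoc]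
      _ = p := by rw [one_add_mul_self_eq_one_add ha, ← mul_assoc]
  have hpb : p * b = p := by
    have : Commute (1 + c) b := (Commute.one_left b).add_left hbc.symm
    calc p * b = (1 + a) * (1 + b) * ((1 + c) * b) := by simp only [p, mul_assoc]
      _ = (1 + a) * ((1 + b) * b) * (1 + c) := by rw [this.eq]; simp only [mul_assoc]
      _ = p := by rw [one_add_mul_self_eq_one_add hb]
  have hpc : p * c = p := by
    rw [mul_assoc, one_add_mul_self_eq_one_add hc]
  rw [mul_sub, mul_one, ← mul_assoc, ← mul_assoc, hpa, hpb, hpc, sub_self]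

end Involutions

section Kronecker

variable {K : Type*} [CommRing K] {m n : Type*} [Fintype m] [Fintype n]
  {A A' : Matrix m m K} {B B' : Matrix n n K}

theorem kronecker_mul_kronecker_of_mul_eq_smul {ε δ : K}
    (hA : A * A' = ε • (A' * A)) (hB : B * B' = δ • (B' * B)) :
    (A ⊗ₖ B) * (A' ⊗ₖ B') = (ε * δ) • ((A' ⊗ₖ B') * (A ⊗ₖ B)) := by
  rw [← mul_kronecker_mul, ← mul_kronecker_mul, hA, hB, smul_kronecker, kronecker_smul, smul_smul]

theorem commute_kronecker_of_mul_eq_smul {ε δ : K}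
    (hA : A * A' = ε • (A' * A)) (hB : B * B' = δ • (B' * B)) (hεδ : ε * δ = 1) :
    Commute (A ⊗ₖ B) (A' ⊗ₖ B') := by
  rw [commute_iff_eq, kronecker_mul_kronecker_of_mul_eq_smul hA hB, hεδ, one_smul]

theorem kronecker_mul_self_eq_one [DecidableEq m] [DecidableEq n]
    (hA : A * A = 1) (hB : B * B = 1) : (A ⊗ₖ B) * (A ⊗ₖ B) = 1 := by
  rw [← mul_kronecker_mul, hA, hB, one_kronecker_one]

end Kronecker

theorem pauliX_mul_self : PauliX * PauliX = 1 := by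
  ext i j; fin_cases i <;> fin_cases j <;> simp [PauliX]

theorem pauliY_mul_self : PauliY * PauliY = 1 := by
  ext i j; fin_cases i <;> fin_cases j <;> simp [PauliY]

theorem pauliX_mul_pauliY : PauliX * PauliY = (-1 : ℂ) • (PauliY * PauliX) := by
  ext i j; fin_cases i <;> fin_cases j <;> simp [PauliX, PauliY]

theorem pauliY_mul_pauliX : PauliY * PauliX = (-1 : ℂ) • (PauliX * PauliY) := by
  rw [pauliX_mul_pauliY, smul_smul]; norm_num

theorem pauliXXX_mul_self :
    (PauliX ⊗ₖ PauliX ⊗ₖ PauliX) * (PauliX ⊗ₖ PauliX ⊗ₖ PauliX) = 1 :=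
  kronecker_mul_self_eq_one (kronecker_mul_self_eq_one pauliX_mul_self pauliX_mul_self)
    pauliX_mul_self

theorem pauliXYY_mul_self :
    (PauliX ⊗ₖ PauliY ⊗ₖ PauliY) * (PauliX ⊗ₖ PauliY ⊗ₖ PauliY) = 1 :=
  kronecker_mul_self_eq_one (kronecker_mul_self_eq_one pauliX_mul_self pauliY_mul_self)
    pauliY_mul_self

theorem pauliYXY_mul_self :
    (PauliY ⊗ₖ PauliX ⊗ₖ PauliY) * (PauliY ⊗ₖ PauliX ⊗ₖ PauliY) = 1 :=
  kronecker_mul_self_eq_one (kronecker_mul_self_eq_one pauliY_mul_self pauliX_mul_self)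
    pauliY_mul_self

theorem commute_pauliXXX_pauliXYY :
    Commute (PauliX ⊗ₖ PauliX ⊗ₖ PauliX) (PauliX ⊗ₖ PauliY ⊗ₖ PauliY) :=
  commute_kronecker_of_mul_eq_smul
    (kronecker_mul_kronecker_of_mul_eq_smul (one_smul ℂ _).symm pauliX_mul_pauliY)
    pauliX_mul_pauliY (by norm_num)

theorem commute_pauliXXX_pauliYXY :
    Commute (PauliX ⊗ₖ PauliX ⊗ₖ PauliX) (PauliY ⊗ₖ PauliX ⊗ₖ PauliY) :=
  commute_kronecker_of_mul_eq_smul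
    (kronecker_mul_kronecker_of_mul_eq_smul pauliX_mul_pauliY (one_smul ℂ _).symm)
    pauliX_mul_pauliY (by norm_num)

theorem commute_pauliXYY_pauliYXY :
    Commute (PauliX ⊗ₖ PauliY ⊗ₖ PauliY) (PauliY ⊗ₖ PauliX ⊗ₖ PauliY) :=
  commute_kronecker_of_mul_eq_smul
    (kronecker_mul_kronecker_of_mul_eq_smul pauliX_mul_pauliY pauliY_mul_pauliX)
    (one_smul ℂ _).symm (by norm_num)

theorem pauliXXX_mul_pauliXYY_mul_pauliYXY :
    (PauliX ⊗ₖ PauliX ⊗ₖ PauliX) * (PauliX ⊗ₖ PauliY ⊗ₖ PauliY) * (PauliY ⊗ₖ PauliX ⊗ₖ PauliY)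
      = -(PauliY ⊗ₖ PauliY ⊗ₖ PauliX) := by
  have hXYX : PauliX * PauliY * PauliX = (-1 : ℂ) • PauliY := by
    rw [pauliX_mul_pauliY, smul_mul_assoc, mul_assoc, pauliX_mul_self, mul_one]
  simp only [← mul_kronecker_mul]
  rw [pauliX_mul_self, one_mul, hXYX, mul_assoc, pauliY_mul_self, mul_one, kronecker_smul,
    smul_kronecker, neg_one_smul]

theorem even_sign_projector_product_zero_general
    (s₁ s₂ s₃ s₄ : ℂ)
    (h₁ : s₁ = 1 ∨ s₁ = -1) (h₂ : s₂ = 1 ∨ s₂ = -1)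
    (h₃ : s₃ = 1 ∨ s₃ = -1)
    (hprod : s₁ * s₂ * s₃ * s₄ = 1) :
    ((1/2 : ℂ) • ((1 : Matrix ((Fin 2 × Fin 2) × Fin 2) ((Fin 2 × Fin 2) × Fin 2) ℂ)
        + s₁ • (PauliX ⊗ₖ PauliX ⊗ₖ PauliX))) *
    ((1/2 : ℂ) • (1 + s₂ • (PauliX ⊗ₖ PauliY ⊗ₖ PauliY))) *
    ((1/2 : ℂ) • (1 + s₃ • (PauliY ⊗ₖ PauliX ⊗ₖ PauliY))) *
    ((1/2 : ℂ) • (1 + s₄ • (PauliY ⊗ₖ PauliY ⊗ₖ PauliX))) = 0 := by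
  have hs₁ := mul_self_eq_one_iff.mpr h₁
  have hs₂ := mul_self_eq_one_iff.mpr h₂
  have hs₃ := mul_self_eq_one_iff.mpr h₃
  have hs₄ : s₄ = s₁ * s₂ * s₃ := by
    linear_combination s₁ * s₂ * s₃ * hprod - s₄ * s₂ ^ 2 * s₃ ^ 2 * hs₁ - s₄ * s₃ ^ 2 * hs₂
      - s₄ * hs₃
  have involutive {s : ℂ} {M : Matrix ((Fin 2 × Fin 2) × Fin 2) ((Fin 2 × Fin 2) × Fin 2) ℂ}
      (hs : s * s = 1) (hM : M * M = 1) : (s • M) * (s • M) = 1 := by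
    rw [smul_mul_smul_comm, hs, hM, one_smul]
  have hunscaled := one_add_mul_one_add_mul_one_add_mul_one_sub_mul_mul_eq_zero
    (involutive hs₁ pauliXXX_mul_self) (involutive hs₂ pauliXYY_mul_self)
    (involutive hs₃ pauliYXY_mul_self)
    ((commute_pauliXXX_pauliXYY.smul_left s₁).smul_right s₂)
    ((commute_pauliXXX_pauliYXY.smul_left s₁).smul_right s₃)
    ((commute_pauliXYY_pauliYXY.smul_left s₂).smul_right s₃)
  rw [smul_mul_smul_comm, smul_mul_smul_comm, pauliXXX_mul_pauliXYY_mul_pauliYXY, smul_neg,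
    sub_neg_eq_add, ← hs₄] at hunscaled
  simp only [smul_mul_smul_comm, hunscaled, smul_zero]

theorem even_sign_projector_product_zero
    (s₁ s₂ s₃ s₄ : ℂ)
    (h₁ : s₁ = 1 ∨ s₁ = -1) (h₂ : s₂ = 1 ∨ s₂ = -1)
    (h₃ : s₃ = 1 ∨ s₃ = -1) (h₄ : s₄ = 1 ∨ s₄ = -1)
    (hprod : s₁ * s₂ * s₃ * s₄ = 1) :
    ((1/2 : ℂ) • ((1 : Matrix ((Fin 2 × Fin 2) × Fin 2) ((Fin 2 × Fin 2) × Fin 2) ℂ)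
        + s₁ • (PauliX ⊗ₖ PauliX ⊗ₖ PauliX))) *
    ((1/2 : ℂ) • (1 + s₂ • (PauliX ⊗ₖ PauliY ⊗ₖ PauliY))) *
    ((1/2 : ℂ) • (1 + s₃ • (PauliY ⊗ₖ PauliX ⊗ₖ PauliY))) *
    ((1/2 : ℂ) • (1 + s₄ • (PauliY ⊗ₖ PauliY ⊗ₖ PauliX))) = 0 :=
  even_sign_projector_product_zero_general s₁ s₂ s₃ s₄ h₁ h₂ h₃ hprod
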